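/- Let n ≥ 1 be an integer and let V_n', V_n'', V_n''' denote the first, second and third derivatives of V_n. Define 𝒱_n(x) = 3·V_n''(x)·( (V_n'(x))² − 2(V_n(x) − V_n(0))·V_n''(x) ) + 2(V_n(x) − V_n(0))·V_n'(x)·V_n'''(x). Then 𝒱_n(x) ≥ 0 for all real x with −1/2 < x < 1/2, and 𝒱_n(x) > 0 whenever in addition x ≠ 0. -/

import Mathlib

/-!
Write `V(x) = U(x²)²` with `U(y) = ∏ₖ (bₖ - y)`, `bₖ = (k + 1/2)²`, and `sⱼ(y) = ∑ₖ (bₖ - y)⁻ʲ`,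
so that `V' = -4 x U² s₁`. Differentiating `V - V(0) = -N V'²` twice shows `𝒱 = N'' V'⁴`,
so everything reduces to the convexity of `N = (V(0) - V) / V'²`.

With `y = x²` one finds `N(x) = G(x²) / 16`, where `G = (1 + A) ρ² Q` with `A = U(0) / U`,
`ρ = 1 / (U s₁)` and `Q = (A - 1) / y = ∑ₖ (bₖ - y)⁻¹ ∏_{l<k} bₗ / (bₗ - y)`. On `y < min bₖ`
each factor is positive, nondecreasing and convex (for `ρ` this is the power-sum inequality
`2 s₁ s₃ ≤ s₁⁴ - s₁² s₂ + 2 s₂²`), and this class is closed under sums and products. Since `Q` is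
even strictly increasing, `N''(x) = (2 G'(x²) + 4 x² G''(x²)) / 16 > 0`, and `V' ≠ 0` for `x ≠ 0`.
-/

open Finset

/-- The φ^{4n} potential `V_n(x) = ∏_{k=1}^n (x² − (k−1/2)²)²`. -/
noncomputable def Vn (n : ℕ) : ℝ → ℝ :=
  fun x => ∏ k ∈ Finset.Icc 1 n, (x ^ 2 - ((k : ℝ) - 1 / 2) ^ 2) ^ 2

/-- `𝒱_n(x) = 3 V_n''(x) ((V_n'(x))² − 2(V_n(x) − V_n(0)) V_n''(x))
      + 2 (V_n(x) − V_n(0)) V_n'(x) V_n'''(x)`. -/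
noncomputable def calV (n : ℕ) (x : ℝ) : ℝ :=
  3 * deriv (deriv (Vn n)) x *
      ((deriv (Vn n) x) ^ 2 - 2 * (Vn n x - Vn n 0) * deriv (deriv (Vn n)) x)
    + 2 * (Vn n x - Vn n 0) * deriv (Vn n) x * deriv (deriv (deriv (Vn n))) x

noncomputable def calVOf (V : ℝ → ℝ) (x : ℝ) : ℝ :=
  3 * deriv (deriv V) x * (deriv V x ^ 2 - 2 * (V x - V 0) * deriv (deriv V) x)
    + 2 * (V x - V 0) * deriv V x * deriv (deriv (deriv V)) x

theorem calVOf_eq_of_sub_eq_neg_mul_deriv_sq {V N N' : ℝ → ℝ} {N'' x : ℝ} {s : Set ℝ}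
    (hs : IsOpen s) (hx : x ∈ s) (hV : ContDiff ℝ 3 V) (hN : ∀ y ∈ s, HasDerivAt N (N' y) y)
    (hN' : HasDerivAt N' N'' x) (hVN : ∀ y ∈ s, V y - V 0 = -(N y * deriv V y ^ 2)) :
    calVOf V x = N'' * deriv V x ^ 4 := by
  set W := deriv V
  have hW (y : ℝ) : HasDerivAt V (W y) y :=
    ((hV.differentiable_iteratedDeriv 0 (by norm_num)) y).hasDerivAt
  have hW' (y : ℝ) : HasDerivAt W (deriv W y) y := by
    have := (hV.differentiable_iteratedDeriv 1 (by norm_num)) y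
    simp only [iteratedDeriv_one] at this
    exact this.hasDerivAt
  have hW'' : HasDerivAt (deriv W) (deriv (deriv W) x) x := by
    have := (hV.differentiable_iteratedDeriv 2 (by norm_num)) x
    simp only [iteratedDeriv_succ, iteratedDeriv_zero] at this
    exact this.hasDerivAt
  have diff_once : ∀ y ∈ s, W y = -(N' y * W y ^ 2 + 2 * N y * W y * deriv W y) := by
    intro y hy
    have hVN' : V =ᶠ[nhds y] fun z => V 0 - N z * W z ^ 2 :=
      Filter.eventuallyEq_of_mem (hs.mem_nhds hy) fun z hz => by linear_combination hVN z hz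
    refine (hW y).unique (((((hN y hy).fun_mul ((hW' y).fun_pow 2)).const_sub (V 0))
      |>.congr_of_eventuallyEq hVN').congr_deriv ?_)
    ring
  have diff_twice : deriv W x = -(N'' * W x ^ 2 + 4 * N' x * W x * deriv W x
      + 2 * N x * deriv W x ^ 2 + 2 * N x * W x * deriv (deriv W) x) := by
    have hfirst : W =ᶠ[nhds x] fun z => -(N' z * W z ^ 2 + 2 * N z * W z * deriv W z) :=
      Filter.eventuallyEq_of_mem (hs.mem_nhds hx) diff_once
    refine (hW' x).unique ((((hN'.fun_mul ((hW' x).fun_pow 2)).fun_add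
      ((((hN x hx).const_mul 2).fun_mul (hW' x)).fun_mul hW'')).fun_neg.congr_of_eventuallyEq
      hfirst).congr_deriv ?_)
    ring
  unfold calVOf
  linear_combination (2 * W x * deriv (deriv W) x - 6 * deriv W x ^ 2) * hVN x hx
    + (4 * W x * deriv W x) * diff_once x hx - W x ^ 2 * diff_twice

structure PosMonoConvexData (s : Set ℝ) (f f' f'' : ℝ → ℝ) : Prop where
  hasDerivAt : ∀ y ∈ s, HasDerivAt f (f' y) y
  hasDerivAt_deriv : ∀ y ∈ s, HasDerivAt f' (f'' y) y
  pos : ∀ y ∈ s, 0 < f y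
  deriv_nonneg : ∀ y ∈ s, 0 ≤ f' y
  deriv2_nonneg : ∀ y ∈ s, 0 ≤ f'' y

def PosMonoConvexOn (s : Set ℝ) (f : ℝ → ℝ) : Prop :=
  ∃ f' f'', PosMonoConvexData s f f' f''

def PosStrictMonoConvexOn (s : Set ℝ) (f : ℝ → ℝ) : Prop :=
  ∃ f' f'', PosMonoConvexData s f f' f'' ∧ ∀ y ∈ s, 0 < f' y

namespace PosMonoConvexData

variable {s : Set ℝ} {f f' f'' g g' g'' : ℝ → ℝ}

theorem add (hf : PosMonoConvexData s f f' f'') (hg : PosMonoConvexData s g g' g'') :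
    PosMonoConvexData s (fun y => f y + g y) (fun y => f' y + g' y) (fun y => f'' y + g'' y) where
  hasDerivAt y hy := (hf.hasDerivAt y hy).fun_add (hg.hasDerivAt y hy)
  hasDerivAt_deriv y hy := (hf.hasDerivAt_deriv y hy).fun_add (hg.hasDerivAt_deriv y hy)
  pos y hy := add_pos (hf.pos y hy) (hg.pos y hy)
  deriv_nonneg y hy := add_nonneg (hf.deriv_nonneg y hy) (hg.deriv_nonneg y hy)
  deriv2_nonneg y hy := add_nonneg (hf.deriv2_nonneg y hy) (hg.deriv2_nonneg y hy)

theorem mul (hf : PosMonoConvexData s f f' f'') (hg : PosMonoConvexData s g g' g'') :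
    PosMonoConvexData s (fun y => f y * g y) (fun y => f' y * g y + f y * g' y)
      (fun y => f'' y * g y + 2 * (f' y * g' y) + f y * g'' y) where
  hasDerivAt y hy := (hf.hasDerivAt y hy).fun_mul (hg.hasDerivAt y hy)
  hasDerivAt_deriv y hy := by
    refine (((hf.hasDerivAt_deriv y hy).fun_mul (hg.hasDerivAt y hy)).fun_add
      ((hf.hasDerivAt y hy).fun_mul (hg.hasDerivAt_deriv y hy))).congr_deriv ?_
    ring
  pos y hy := mul_pos (hf.pos y hy) (hg.pos y hy)
  deriv_nonneg y hy := by
    have := hf.pos y hy; have := hg.pos y hy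
    have := hf.deriv_nonneg y hy; have := hg.deriv_nonneg y hy
    positivity
  deriv2_nonneg y hy := by
    have := hf.pos y hy; have := hg.pos y hy
    have := hf.deriv_nonneg y hy; have := hg.deriv_nonneg y hy
    have := hf.deriv2_nonneg y hy; have := hg.deriv2_nonneg y hy
    positivity

end PosMonoConvexData

theorem PosMonoConvexOn.const {s : Set ℝ} {c : ℝ} (hc : 0 < c) : PosMonoConvexOn s fun _ => c :=
  ⟨fun _ => 0, fun _ => 0, fun y _ => hasDerivAt_const y c, fun y _ => hasDerivAt_const y 0,
    fun _ _ => hc, fun _ _ => le_rfl, fun _ _ => le_rfl⟩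

namespace PosMonoConvexOn

variable {s : Set ℝ} {f g : ℝ → ℝ}

theorem add (hf : PosMonoConvexOn s f) (hg : PosMonoConvexOn s g) :
    PosMonoConvexOn s fun y => f y + g y :=
  let ⟨_, _, hf⟩ := hf; let ⟨_, _, hg⟩ := hg; ⟨_, _, hf.add hg⟩

theorem mul (hf : PosMonoConvexOn s f) (hg : PosMonoConvexOn s g) :
    PosMonoConvexOn s fun y => f y * g y :=
  let ⟨_, _, hf⟩ := hf; let ⟨_, _, hg⟩ := hg; ⟨_, _, hf.mul hg⟩

theorem finset_prod {ι : Type*} (t : Finset ι) {F : ι → ℝ → ℝ}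
    (hF : ∀ i ∈ t, PosMonoConvexOn s (F i)) : PosMonoConvexOn s fun y => ∏ i ∈ t, F i y := by
  classical
  induction t using Finset.induction_on with
  | empty => simpa using const one_pos
  | insert i t hi ih =>
    simp only [prod_insert hi]
    exact (hF i (mem_insert_self i t)).mul (ih fun j hj => hF j (mem_insert_of_mem hj))

theorem mul_posStrictMonoConvexOn (hf : PosMonoConvexOn s f) (hg : PosStrictMonoConvexOn s g) :
    PosStrictMonoConvexOn s fun y => f y * g y := by
  obtain ⟨f', f'', hf⟩ := hf
  obtain ⟨g', g'', hg, hg'⟩ := hg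
  refine ⟨_, _, hf.mul hg, fun y hy => ?_⟩
  have := hf.deriv_nonneg y hy; have := hf.pos y hy
  have := hg' y hy; have := hg.pos y hy
  positivity

end PosMonoConvexOn

namespace PosStrictMonoConvexOn

variable {s : Set ℝ} {f g : ℝ → ℝ}

theorem posMonoConvexOn (hf : PosStrictMonoConvexOn s f) : PosMonoConvexOn s f :=
  let ⟨_, _, hf, _⟩ := hf; ⟨_, _, hf⟩

theorem add (hf : PosStrictMonoConvexOn s f) (hg : PosStrictMonoConvexOn s g) :
    PosStrictMonoConvexOn s fun y => f y + g y :=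
  let ⟨_, _, hf, hf'⟩ := hf; let ⟨_, _, hg, hg'⟩ := hg
  ⟨_, _, hf.add hg, fun y hy => add_pos (hf' y hy) (hg' y hy)⟩

theorem finset_sum {ι : Type*} {t : Finset ι} (ht : t.Nonempty) {F : ι → ℝ → ℝ}
    (hF : ∀ i ∈ t, PosStrictMonoConvexOn s (F i)) :
    PosStrictMonoConvexOn s fun y => ∑ i ∈ t, F i y := by
  induction ht using Finset.Nonempty.cons_induction with
  | singleton i => simpa using hF i (mem_singleton_self i)
  | cons i t hi _ ih =>
    simp only [sum_cons]
    exact (hF i (mem_cons_self i t)).add (ih fun j hj => hF j (mem_cons_of_mem hj))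

end PosStrictMonoConvexOn

theorem hasDerivAt_inv_sub_pow {c y : ℝ} (hy : y ≠ c) (j : ℕ) :
    HasDerivAt (fun z => (c - z)⁻¹ ^ j) (j * (c - y)⁻¹ ^ (j + 1)) y := by
  have hcy : c - y ≠ 0 := sub_ne_zero.2 hy.symm
  refine ((((hasDerivAt_id' y).const_sub c).fun_inv hcy).fun_pow j).congr_deriv ?_
  rcases j with _ | j
  · simp
  · rw [Nat.add_sub_cancel]
    simp only [inv_pow]
    field_simp
    ring

theorem posStrictMonoConvexOn_inv_sub {s : Set ℝ} {c : ℝ} (hs : ∀ y ∈ s, y < c) :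
    PosStrictMonoConvexOn s fun y => (c - y)⁻¹ := by
  refine ⟨fun y => (c - y)⁻¹ ^ 2, fun y => 2 * (c - y)⁻¹ ^ 3,
    ⟨fun y hy => ?_, fun y hy => ?_, fun y hy => ?_, fun y hy => ?_, fun y hy => ?_⟩,
    fun y hy => ?_⟩
  · simpa using hasDerivAt_inv_sub_pow (hs y hy).ne 1
  · simpa using hasDerivAt_inv_sub_pow (hs y hy).ne 2
  all_goals have := sub_pos.2 (hs y hy); positivity

theorem two_mul_sum_mul_sum_pow_three_le {ι : Type*} (t : Finset ι) (f : ι → ℝ) :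
    2 * (∑ i ∈ t, f i) * ∑ i ∈ t, f i ^ 3 ≤
      (∑ i ∈ t, f i) ^ 4 - (∑ i ∈ t, f i) ^ 2 * ∑ i ∈ t, f i ^ 2 + 2 * (∑ i ∈ t, f i ^ 2) ^ 2 := by
  set p := ∑ i ∈ t, f i
  set q := ∑ i ∈ t, f i ^ 2
  set r := ∑ i ∈ t, f i ^ 3
  have hq : 0 ≤ q := sum_nonneg fun i _ => sq_nonneg (f i)
  have hrq : r ^ 2 ≤ q ^ 3 := calc
    r ^ 2 = (∑ i ∈ t, f i * f i ^ 2) ^ 2 := by simp only [r, ← pow_succ']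
    _ ≤ q * ∑ i ∈ t, (f i ^ 2) ^ 2 := sum_mul_sq_le_sq_mul_sq t _ _
    _ ≤ q * q ^ 2 := mul_le_mul_of_nonneg_left
        (sum_sq_le_sq_sum_of_nonneg fun i _ => sq_nonneg (f i)) hq
    _ = q ^ 3 := by ring
  -- `r² ≤ q³` makes the quadratic `q p² - 2 r p + q²` in `p` nonnegative, and the claim reads
  -- `(p² - q)² + (q p² - 2 r p + q²) ≥ 0`.
  rcases hq.eq_or_lt with hq0 | hq0
  · have hr : r = 0 := by
      rw [← hq0] at hrq
      exact pow_eq_zero_iff two_ne_zero |>.1 (le_antisymm (by simpa using hrq) (sq_nonneg r))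
    rw [← hq0, hr]
    nlinarith [pow_two_nonneg (p ^ 2)]
  · refine le_of_mul_le_mul_left ?_ hq0
    nlinarith [mul_nonneg hq (sq_nonneg (p ^ 2 - q)), sq_nonneg (q * p - r)]

section Potential

variable (b : ℕ → ℝ) (n : ℕ)

-- `U = prodSub`, `sⱼ = invPowerSum j`, `A = ratioProd`, `Q = telescopeSum`, `G = potentialQuotient`
-- and `V = potential`, with `U`, `sⱼ`, `A`, `Q`, `G`, `V` as in the overview above.
noncomputable def prodSub (y : ℝ) : ℝ := ∏ k ∈ range n, (b k - y)

noncomputable def invPowerSum (j : ℕ) (y : ℝ) : ℝ := ∑ k ∈ range n, (b k - y)⁻¹ ^ j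

noncomputable def ratioProd (y : ℝ) : ℝ := ∏ k ∈ range n, b k * (b k - y)⁻¹

noncomputable def telescopeSum (y : ℝ) : ℝ := ∑ k ∈ range n, ratioProd b k y * (b k - y)⁻¹

noncomputable def potential (x : ℝ) : ℝ := prodSub b n (x ^ 2) ^ 2

noncomputable def potentialQuotient (y : ℝ) : ℝ :=
  (1 + ratioProd b n y) * (prodSub b n y * invPowerSum b n 1 y)⁻¹ ^ 2 * telescopeSum b n y

variable {b n}

theorem hasDerivAt_invPowerSum {y : ℝ} (hy : ∀ k ∈ range n, y ≠ b k) (j : ℕ) :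
    HasDerivAt (invPowerSum b n j) (j * invPowerSum b n (j + 1) y) y := by
  unfold invPowerSum
  rw [mul_sum]
  exact HasDerivAt.fun_sum fun k hk => hasDerivAt_inv_sub_pow (hy k hk) j

theorem hasDerivAt_prodSub {y : ℝ} (hy : ∀ k ∈ range n, y ≠ b k) :
    HasDerivAt (prodSub b n) (-(prodSub b n y * invPowerSum b n 1 y)) y := by
  induction n with
  | zero =>
    have h0 : prodSub b 0 = fun _ => 1 := funext fun _ => prod_range_zero _
    simpa [h0, invPowerSum] using hasDerivAt_const y (1 : ℝ)
  | succ n ih =>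
    have hn : b n - y ≠ 0 := sub_ne_zero.2 (hy n (self_mem_range_succ n)).symm
    have hsucc : prodSub b (n + 1) = fun z => prodSub b n z * (b n - z) :=
      funext fun z => prod_range_succ _ _
    rw [hsucc]
    refine ((ih fun k hk => hy k (mem_range_succ_iff.2 (mem_range.1 hk).le)).fun_mul
      ((hasDerivAt_id' y).const_sub (b n))).congr_deriv ?_
    simp only [prodSub, invPowerSum, sum_range_succ]
    field_simp
    ring

theorem prodSub_pos {y : ℝ} (hy : ∀ k ∈ range n, y < b k) : 0 < prodSub b n y :=
  prod_pos fun k hk => sub_pos.2 (hy k hk)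

theorem invPowerSum_pos {y : ℝ} (hn : n ≠ 0) (hy : ∀ k ∈ range n, y < b k) (j : ℕ) :
    0 < invPowerSum b n j y :=
  sum_pos (fun k hk => pow_pos (inv_pos.2 (sub_pos.2 (hy k hk))) j) (nonempty_range_iff.2 hn)

theorem posMonoConvexOn_inv_prodSub_mul_invPowerSum {s : Set ℝ} (hn : n ≠ 0)
    (hs : ∀ y ∈ s, ∀ k ∈ range n, y < b k) :
    PosMonoConvexOn s fun y => (prodSub b n y * invPowerSum b n 1 y)⁻¹ := by
  refine ⟨fun y => (invPowerSum b n 1 y ^ 2 - invPowerSum b n 2 y) *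
      (prodSub b n y * invPowerSum b n 1 y ^ 2)⁻¹,
    fun y => (invPowerSum b n 1 y ^ 4 - invPowerSum b n 1 y ^ 2 * invPowerSum b n 2 y
      + 2 * invPowerSum b n 2 y ^ 2 - 2 * invPowerSum b n 1 y * invPowerSum b n 3 y) *
      (prodSub b n y * invPowerSum b n 1 y ^ 3)⁻¹,
    ⟨fun y hy => ?_, fun y hy => ?_, fun y hy => ?_, fun y hy => ?_, fun y hy => ?_⟩⟩
  all_goals
    have hne : ∀ k ∈ range n, y ≠ b k := fun k hk => (hs y hy k hk).ne
    have := prodSub_pos (hs y hy)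
    have := invPowerSum_pos hn (hs y hy) 1
  · refine ((hasDerivAt_prodSub hne).fun_mul (hasDerivAt_invPowerSum hne 1)).fun_inv
      (by positivity) |>.congr_deriv ?_
    field_simp
    push_cast
    ring
  · have hS1 := hasDerivAt_invPowerSum hne 1
    refine (((hS1.fun_pow 2).fun_sub (hasDerivAt_invPowerSum hne 2)).fun_mul
      (((hasDerivAt_prodSub hne).fun_mul (hS1.fun_pow 2)).fun_inv (by positivity))).congr_deriv ?_
    field_simp
    push_cast
    ring
  · positivity
  all_goals refine mul_nonneg (sub_nonneg.2 ?_) (by positivity)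
  · simpa [invPowerSum] using sum_sq_le_sq_sum_of_nonneg fun k hk =>
      (inv_pos.2 (sub_pos.2 (hs y hy k hk))).le
  · have := two_mul_sum_mul_sum_pow_three_le (range n) fun k => (b k - y)⁻¹
    simp only [invPowerSum, pow_one]
    linarith

theorem posMonoConvexOn_ratioProd {s : Set ℝ} (hb : ∀ k ∈ range n, 0 < b k)
    (hs : ∀ y ∈ s, ∀ k ∈ range n, y < b k) : PosMonoConvexOn s (ratioProd b n) :=
  PosMonoConvexOn.finset_prod _ fun k hk => (PosMonoConvexOn.const (hb k hk)).mul
    (posStrictMonoConvexOn_inv_sub fun y hy => hs y hy k hk).posMonoConvexOn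

theorem posStrictMonoConvexOn_telescopeSum {s : Set ℝ} (hn : n ≠ 0)
    (hb : ∀ k ∈ range n, 0 < b k) (hs : ∀ y ∈ s, ∀ k ∈ range n, y < b k) :
    PosStrictMonoConvexOn s (telescopeSum b n) :=
  PosStrictMonoConvexOn.finset_sum (nonempty_range_iff.2 hn) fun k hk => by
    have hsub : range k ⊆ range n := range_subset_range.2 (mem_range.1 hk).le
    exact (posMonoConvexOn_ratioProd (fun l hl => hb l (hsub hl))
      fun y hy l hl => hs y hy l (hsub hl)).mul_posStrictMonoConvexOn
      (posStrictMonoConvexOn_inv_sub fun y hy => hs y hy k hk)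

theorem posStrictMonoConvexOn_potentialQuotient {s : Set ℝ} (hn : n ≠ 0)
    (hb : ∀ k ∈ range n, 0 < b k) (hs : ∀ y ∈ s, ∀ k ∈ range n, y < b k) :
    PosStrictMonoConvexOn s (potentialQuotient b n) := by
  have hρ := posMonoConvexOn_inv_prodSub_mul_invPowerSum hn hs
  have := (((PosMonoConvexOn.const one_pos).add (posMonoConvexOn_ratioProd hb hs)).mul
    (hρ.mul hρ)).mul_posStrictMonoConvexOn (posStrictMonoConvexOn_telescopeSum hn hb hs)
  convert this using 1
  ext y
  rw [potentialQuotient, sq]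

theorem mul_telescopeSum {y : ℝ} (hy : ∀ k ∈ range n, y ≠ b k) :
    y * telescopeSum b n y = ratioProd b n y - 1 := by
  have hstep : ∀ k ∈ range n, ratioProd b (k + 1) y - ratioProd b k y
      = y * (ratioProd b k y * (b k - y)⁻¹) := by
    intro k hk
    have := sub_ne_zero.2 (hy k hk).symm
    rw [ratioProd, prod_range_succ, ← ratioProd]
    field_simp
    ring
  rw [telescopeSum, mul_sum, ← sum_congr rfl hstep]
  exact (sum_range_sub (fun k => ratioProd b k y) n).trans (by simp [ratioProd])

theorem prodSub_mul_ratioProd {y : ℝ} (hy : ∀ k ∈ range n, y ≠ b k) :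
    prodSub b n y * ratioProd b n y = prodSub b n 0 := by
  rw [prodSub, ratioProd, prodSub, ← prod_mul_distrib]
  refine prod_congr rfl fun k hk => ?_
  have := sub_ne_zero.2 (hy k hk).symm
  field_simp
  ring

theorem prodSub_zero_sq_sub_sq {y : ℝ} (hn : n ≠ 0) (hy : ∀ k ∈ range n, y < b k) :
    prodSub b n 0 ^ 2 - prodSub b n y ^ 2
      = y * prodSub b n y ^ 4 * invPowerSum b n 1 y ^ 2 * potentialQuotient b n y := by
  have hne : ∀ k ∈ range n, y ≠ b k := fun k hk => (hy k hk).ne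
  have hU := (prodSub_pos hy).ne'
  have hS := (invPowerSum_pos hn hy 1).ne'
  rw [← prodSub_mul_ratioProd hne, potentialQuotient]
  field_simp
  linear_combination -(1 + ratioProd b n y) * mul_telescopeSum hne

theorem hasDerivAt_potential {x : ℝ} (hx : ∀ k ∈ range n, x ^ 2 ≠ b k) :
    HasDerivAt (potential b n)
      (-(4 * x * prodSub b n (x ^ 2) ^ 2 * invPowerSum b n 1 (x ^ 2))) x := by
  refine (((hasDerivAt_prodSub hx).comp (h := fun z : ℝ => z ^ 2) x (hasDerivAt_pow 2 x)).fun_pow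
    2).congr_deriv ?_
  simp only [Function.comp_apply]
  push_cast
  ring

theorem deriv_potential_ne_zero (hn : n ≠ 0) {x : ℝ} (hx : ∀ k ∈ range n, x ^ 2 < b k)
    (hx0 : x ≠ 0) : deriv (potential b n) x ≠ 0 := by
  rw [(hasDerivAt_potential fun k hk => (hx k hk).ne).deriv]
  simp [hx0, (invPowerSum_pos hn hx 1).ne', (prodSub_pos hx).ne']

theorem potential_sub_potential_zero (hn : n ≠ 0) {x : ℝ} (hx : ∀ k ∈ range n, x ^ 2 < b k) :
    potential b n x - potential b n 0
      = -(potentialQuotient b n (x ^ 2) / 16 * deriv (potential b n) x ^ 2) := by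
  rw [(hasDerivAt_potential fun k hk => (hx k hk).ne).deriv, potential, potential,
    ← neg_sub, zero_pow two_ne_zero, prodSub_zero_sq_sub_sq hn hx]
  ring

theorem exists_pos_calVOf_potential_eq (hn : n ≠ 0) {m x : ℝ} (hm : ∀ k ∈ range n, m ≤ b k)
    (hx : x ^ 2 < m) :
    ∃ c > 0, calVOf (potential b n) x = c * deriv (potential b n) x ^ 4 := by
  have hs : ∀ y ∈ Set.Iio m, ∀ k ∈ range n, y < b k := fun y hy k hk => hy.trans_le (hm k hk)
  have hb : ∀ k ∈ range n, 0 < b k := fun k hk => (sq_nonneg x).trans_lt (hs _ hx k hk)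
  obtain ⟨G', G'', hG, hG'⟩ := posStrictMonoConvexOn_potentialQuotient hn hb hs
  have hN (z : ℝ) (hz : z ^ 2 < m) : HasDerivAt (fun z => potentialQuotient b n (z ^ 2) / 16)
      (z * G' (z ^ 2) / 8) z := by
    refine (((hG.hasDerivAt _ hz).comp (h := fun z : ℝ => z ^ 2) z (hasDerivAt_pow 2 z)).div_const
      16).congr_deriv ?_
    push_cast
    ring
  have hN' : HasDerivAt (fun z => z * G' (z ^ 2) / 8)
      ((G' (x ^ 2) + 2 * x ^ 2 * G'' (x ^ 2)) / 8) x := by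
    refine (((hasDerivAt_id' x).fun_mul ((hG.hasDerivAt_deriv _ hx).comp (h := fun z : ℝ => z ^ 2)
      x (hasDerivAt_pow 2 x))).div_const 8).congr_deriv ?_
    simp only [Function.comp_apply]
    push_cast
    ring
  refine ⟨_, ?_, calVOf_eq_of_sub_eq_neg_mul_deriv_sq (isOpen_Iio.preimage (continuous_pow 2)) hx
    (by unfold potential prodSub; fun_prop) hN hN'
    fun z hz => potential_sub_potential_zero hn (hs _ hz)⟩
  have := hG' _ hx
  have := hG.deriv2_nonneg _ hx
  positivity

end Potential

theorem Vn_eq_potential (n : ℕ) : Vn n = potential (fun k => ((k : ℝ) + 1 / 2) ^ 2) n := by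
  funext x
  rw [Vn, potential, prodSub, ← prod_pow, ← Ico_add_one_right_eq_Icc, prod_Ico_eq_prod_range,
    Nat.add_sub_cancel]
  refine prod_congr rfl fun k _ => ?_
  push_cast
  ring

theorem stmt5 (n : ℕ) (hn : 1 ≤ n) (x : ℝ) (hx : x ∈ Set.Ioo (-(1 / 2) : ℝ) (1 / 2)) :
    0 ≤ calV n x ∧ (x ≠ 0 → 0 < calV n x) := by
  have hn0 : n ≠ 0 := Nat.one_le_iff_ne_zero.1 hn
  have hb : ∀ k ∈ range n, 1 / 4 ≤ ((k : ℝ) + 1 / 2) ^ 2 := fun k _ => by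
    nlinarith [k.cast_nonneg (α := ℝ)]
  have hx2 : x ^ 2 < 1 / 4 := by nlinarith [hx.1, hx.2]
  obtain ⟨c, hc, hcalV⟩ := exists_pos_calVOf_potential_eq hn0 hb hx2
  have hV' := deriv_potential_ne_zero hn0 fun k hk => hx2.trans_le (hb k hk)
  rw [← Vn_eq_potential] at hcalV hV'
  change calV n x = _ at hcalV
  rw [hcalV]
  exact ⟨by positivity, fun hx0 => have := hV' hx0; by positivity⟩
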